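/- arXiv:math/0610650 — 3 statements merged into one kernel-verified Lean document; each statement's English description precedes it below -/
import Mathlib

section
/- Let k be a field, R = k[a, b, c, d, e], R' = k[a, b, c, d] ⊆ R, and let M₄ = R/((a − b)(e − b), c − d). Let M₄' be the R'-submodule of M₄ generated by the class of 1, and let M₄'' be the R-submodule of M₄ generated by the class of e − b, regarded as an R'-submodule by restriction of scalars. Then M₄ is the internal direct sum M₄ = M₄' ⊕ M₄'' of R'-submodules. -/
open MvPolynomial Polynomial

namespace Polynomial

variable {A : Type*} [CommRing A]

theorem quotient_smul_one (I : Ideal A[X]) (r : A) :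
    r • (1 : A[X] ⧸ I) = Ideal.Quotient.mk I (C r) := by
  rw [← Algebra.algebraMap_eq_smul_one]
  rfl

theorem quotient_smul_mk (I : Ideal A[X]) (f p : A[X]) :
    f • Ideal.Quotient.mk I p = Ideal.Quotient.mk I (f * p) :=
  rfl

/-- Taylor expansion at `b` to first order: `p = p(b) + (X - b) · (p /ₘ (X - b))`. -/
theorem quotient_span_one_sup_span_X_sub_C_eq_top (I : Ideal A[X]) (b : A) :
    Submodule.span A {(1 : A[X] ⧸ I)} ⊔
      (Submodule.span A[X] {Ideal.Quotient.mk I (X - C b)}).restrictScalars A = ⊤ := by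
  refine eq_top_iff.mpr fun x _ => ?_
  obtain ⟨p, rfl⟩ := Ideal.Quotient.mk_surjective x
  rw [← modByMonic_add_div p (X - C b), modByMonic_X_sub_C_eq_C_eval, map_add]
  refine Submodule.add_mem_sup ?_ ?_
  · exact quotient_smul_one I (p.eval b) ▸
      Submodule.smul_mem _ _ (Submodule.mem_span_singleton_self _)
  · exact Submodule.mem_span_singleton.mpr ⟨p /ₘ (X - C b), by rw [quotient_smul_mk, mul_comm]⟩

theorem quotient_span_one_inf_span_X_sub_C_eq_bot (I : Ideal A[X]) (b : A)
    (hI : ∀ (r : A) (f : A[X]), C r - f * (X - C b) ∈ I → C r ∈ I) :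
    Submodule.span A {(1 : A[X] ⧸ I)} ⊓
      (Submodule.span A[X] {Ideal.Quotient.mk I (X - C b)}).restrictScalars A = ⊥ := by
  refine eq_bot_iff.mpr fun x ⟨hx₁, hx₂⟩ => ?_
  obtain ⟨r, rfl⟩ := Submodule.mem_span_singleton.mp hx₁
  obtain ⟨f, hf⟩ := Submodule.mem_span_singleton.mp hx₂
  rw [quotient_smul_one] at hf ⊢
  rw [quotient_smul_mk] at hf
  refine (Submodule.mem_bot A).mpr (Ideal.Quotient.eq_zero_iff_mem.mpr (hI r f ?_))
  rw [← Ideal.Quotient.eq_zero_iff_mem, map_sub, hf, sub_self]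

/-- Evaluating at `b` kills `f * (X - b)` and the first generator, so `r` is a multiple of `g`. -/
theorem C_mem_span_of_C_sub_mul_X_sub_C_mem {q : A[X]} {b g r : A} {f : A[X]}
    (h : C r - f * (X - C b) ∈ Ideal.span {q * (X - C b), C g}) :
    C r ∈ Ideal.span {q * (X - C b), C g} := by
  obtain ⟨u, v, huv⟩ := Ideal.mem_span_pair.mp h
  have hr : (v.eval b) * g = r := by
    simpa using congrArg (eval b) huv
  rw [← hr, C_mul]
  exact Ideal.mul_mem_left _ _ (Ideal.subset_span (Set.mem_insert_of_mem _ rfl))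

end Polynomial

/-- In `R = k[a, b, c, d, e]`, realized as `(k[a, b, c, d])[e]`
(so `R' = k[a, b, c, d] = MvPolynomial (Fin 4) k` is the base ring,
`a = C (X 0)`, `b = C (X 1)`, `c = C (X 2)`, `d = C (X 3)`, `e = Polynomial.X`),
let `M₄ = R/((a − b)(e − b), c − d)`.  Then `M₄` is the internal direct sum of the
`R'`-submodule generated by the class of `1` and the `R`-submodule generated by the
class of `e − b` (viewed as an `R'`-submodule by restriction of scalars). -/
theorem IIb_M4_decomposition (k : Type*) [Field k] :
    ∀ I : Ideal (Polynomial (MvPolynomial (Fin 4) k)),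
      I = Ideal.span {(Polynomial.C (X 0) - Polynomial.C (X 1)) *
            (Polynomial.X - Polynomial.C (X 1)),
          Polynomial.C (X 2) - Polynomial.C (X 3)} →
      (Submodule.span (MvPolynomial (Fin 4) k)
          {(1 : Polynomial (MvPolynomial (Fin 4) k) ⧸ I)} ⊔
        Submodule.restrictScalars (MvPolynomial (Fin 4) k)
          (Submodule.span (Polynomial (MvPolynomial (Fin 4) k))
            {Ideal.Quotient.mk I (Polynomial.X - Polynomial.C (X 1))}) = ⊤) ∧
      (Submodule.span (MvPolynomial (Fin 4) k)
          {(1 : Polynomial (MvPolynomial (Fin 4) k) ⧸ I)} ⊓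
        Submodule.restrictScalars (MvPolynomial (Fin 4) k)
          (Submodule.span (Polynomial (MvPolynomial (Fin 4) k))
            {Ideal.Quotient.mk I (Polynomial.X - Polynomial.C (X 1))}) = ⊥) := by
  rintro I rfl
  refine ⟨quotient_span_one_sup_span_X_sub_C_eq_top _ _,
    quotient_span_one_inf_span_X_sub_C_eq_bot _ _ fun r f h => ?_⟩
  rw [← Polynomial.C_sub (a := X 2)] at h ⊢
  exact C_mem_span_of_C_sub_mul_X_sub_C_mem h
end

section
/- Let k be a field, R = k[a, b, c, d, e], R' = k[a, b, c, d] ⊆ R, let M₃ = R/((a − b)(e − b), (c − d)(e − d)), and let M₃' be the R'-submodule of M₃ generated by the classes of 1 and e. Set s = a − b − c + d ∈ R'. Then s acts on M₃' without zero-divisors: for every x ∈ M₃', if s·x = 0 then x = 0. -/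
/-!
Write `x = p + q e` with `p, q ∈ R'`. If `s x` lies in the ideal, evaluating a witness at `e = b`
and at `e = d` shows that `(c - d)(b - d)` divides `s (p + q b)` and `(a - b)(d - b)` divides
`s (p + q d)`. Since `s` is prime (it is monic of degree one in `a`) and vanishes at
`(a, b, c, d) = (2, 1, 1, 0)` where those factors do not, `s` cancels; the two resulting
divisibilities determine `p` and `q` as an explicit combination of the two generators.
-/

open MvPolynomial Polynomial

theorem Prime.dvd_of_dvd_mul_left_of_not_dvd {α : Type*} [CommMonoidWithZero α]
    [IsCancelMulZero α] {s m y : α} (hs : Prime s) (hm : ¬ s ∣ m) (h : m ∣ s * y) :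
    m ∣ y := by
  obtain ⟨t, ht⟩ := h
  obtain ⟨t', rfl⟩ := (hs.dvd_or_dvd ⟨y, ht.symm⟩).resolve_left hm
  exact ⟨t', mul_left_cancel₀ hs.ne_zero (by rw [ht, mul_left_comm])⟩

namespace Polynomial

variable {A : Type*} [CommRing A] {u v b d : A}

theorem dvd_eval_of_mem_span_pair {y : A[X]}
    (hy : y ∈ Ideal.span {C u * (X - C b), C v * (X - C d)}) :
    v * (b - d) ∣ y.eval b ∧ u * (d - b) ∣ y.eval d := by
  obtain ⟨f, g, rfl⟩ := Ideal.mem_span_pair.mp hy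
  constructor
  · exact ⟨g.eval b, by simp; ring⟩
  · exact ⟨f.eval d, by simp; ring⟩

theorem C_add_C_mul_X_mem_span_pair [IsDomain A] {p q f g : A} (hbd : b - d ≠ 0)
    (hb : p + q * b = v * (b - d) * g) (hd : p + q * d = u * (d - b) * f) :
    C p + C q * X ∈ Ideal.span {C u * (X - C b), C v * (X - C d)} := by
  have hq : q = u * f + v * g := mul_right_cancel₀ hbd (by linear_combination hb - hd)
  have hp : p = -(u * b * f) - v * d * g := by linear_combination hb - b * hq
  refine Ideal.mem_span_pair.mpr ⟨C f, C g, ?_⟩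
  rw [hp, hq]
  simp only [map_add, map_sub, map_mul, map_neg]
  ring

theorem C_add_C_mul_X_mem_span_pair_of_C_mul_mem [IsDomain A] {s p q : A} (hs : Prime s)
    (hv : ¬ s ∣ v * (b - d)) (hu : ¬ s ∣ u * (d - b))
    (h : C s * (C p + C q * X) ∈ Ideal.span {C u * (X - C b), C v * (X - C d)}) :
    C p + C q * X ∈ Ideal.span {C u * (X - C b), C v * (X - C d)} := by
  obtain ⟨hvb, hud⟩ := dvd_eval_of_mem_span_pair h
  simp only [eval_mul, eval_add, eval_C, eval_X] at hvb hud
  obtain ⟨g, hg⟩ := hs.dvd_of_dvd_mul_left_of_not_dvd hv hvb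
  obtain ⟨f, hf⟩ := hs.dvd_of_dvd_mul_left_of_not_dvd hu hud
  have hbd : b - d ≠ 0 := by rintro h0; exact hv (by simp [h0])
  exact C_add_C_mul_X_mem_span_pair hbd hg hf

theorem smul_mk_eq_mk_C_mul (J : Ideal A[X]) (r : A) (y : A[X]) :
    r • Ideal.Quotient.mk J y = Ideal.Quotient.mk J (C r * y) := by
  rw [← smul_eq_C_mul]; rfl

theorem eq_zero_of_smul_eq_zero_of_mem_span_one_X [IsDomain A] {a c s : A} (hs : Prime s)
    (hcd : ¬ s ∣ (c - d) * (b - d)) (hab : ¬ s ∣ (a - b) * (d - b))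
    {x : A[X] ⧸ Ideal.span {(C a - C b) * (X - C b), (C c - C d) * (X - C d)}}
    (hx : x ∈ Submodule.span A {1, Ideal.Quotient.mk _ X}) (hsx : s • x = 0) : x = 0 := by
  obtain ⟨p, q, rfl⟩ := Submodule.mem_span_pair.mp hx
  rw [← map_one (Ideal.Quotient.mk _), smul_mk_eq_mk_C_mul, smul_mk_eq_mk_C_mul, ← map_add,
    mul_one] at hsx ⊢
  rw [smul_mk_eq_mk_C_mul, Ideal.Quotient.eq_zero_iff_mem] at hsx
  rw [Ideal.Quotient.eq_zero_iff_mem]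
  simp only [← map_sub] at hsx ⊢
  exact C_add_C_mul_X_mem_span_pair_of_C_mul_mem hs hcd hab hsx

end Polynomial

theorem MvPolynomial.finSuccEquiv_rename_succ {R : Type*} [CommSemiring R] {n : ℕ}
    (p : MvPolynomial (Fin n) R) :
    finSuccEquiv R n (rename Fin.succ p) = Polynomial.C p := by
  induction p using MvPolynomial.induction_on with
  | C r => simp [finSuccEquiv_apply]
  | add p q hp hq => simp [hp, hq]
  | mul_X p i hp => simp [hp, finSuccEquiv_X_succ]

theorem MvPolynomial.prime_X_zero_sub_rename_succ {R : Type*} [CommRing R] [IsDomain R]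
    {n : ℕ} (p : MvPolynomial (Fin n) R) : Prime (X 0 - rename Fin.succ p) := by
  rw [← MulEquiv.prime_iff (finSuccEquiv R n).toMulEquiv]
  simpa [finSuccEquiv_rename_succ, finSuccEquiv_X_zero] using Polynomial.prime_X_sub_C p

theorem MvPolynomial.not_dvd_of_eval_eq_zero {R σ : Type*} [CommSemiring R]
    {s t : MvPolynomial σ R} (x : σ → R) (hs : eval x s = 0) (ht : eval x t ≠ 0) : ¬ s ∣ t :=
  fun h => ht (zero_dvd_iff.mp (hs ▸ map_dvd (eval x) h))

/-- In `R = k[a, b, c, d, e]`, realized as `(k[a, b, c, d])[e]`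
(so `R' = k[a, b, c, d] = MvPolynomial (Fin 4) k` is the base ring,
`a = C (X 0)`, `b = C (X 1)`, `c = C (X 2)`, `d = C (X 3)`, `e = Polynomial.X`),
let `M₃ = R/((a − b)(e − b), (c − d)(e − d))` and let `M₃'` be the `R'`-submodule
generated by the classes of `1` and `e`.  Then `s = a − b − c + d ∈ R'` acts on `M₃'`
without zero-divisors: multiplication by `s` is injective on `M₃'`. -/
theorem IIb_s_regular_on_M3' (k : Type*) [Field k] :
    ∀ I : Ideal (Polynomial (MvPolynomial (Fin 4) k)),
      I = Ideal.span {(Polynomial.C (X 0) - Polynomial.C (X 1)) *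
            (Polynomial.X - Polynomial.C (X 1)),
          (Polynomial.C (X 2) - Polynomial.C (X 3)) *
            (Polynomial.X - Polynomial.C (X 3))} →
      ∀ x ∈ Submodule.span (MvPolynomial (Fin 4) k)
          {(1 : Polynomial (MvPolynomial (Fin 4) k) ⧸ I),
            Ideal.Quotient.mk I Polynomial.X},
        (X 0 - X 1 - X 2 + X 3 : MvPolynomial (Fin 4) k) • x = 0 → x = 0 := by
  rintro I rfl x hx hsx
  have hs : (X 0 - X 1 - X 2 + X 3 : MvPolynomial (Fin 4) k) =
      X 0 - rename Fin.succ (X 0 + X 1 - X 2) := by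
    have h2 : (Fin.succ 2 : Fin 4) = 3 := rfl
    simp only [map_add, map_sub, rename_X, Fin.succ_zero_eq_one, Fin.succ_one_eq_two, h2]
    ring
  have hs_zero : MvPolynomial.eval ![(2 : k), 1, 1, 0] (X 0 - X 1 - X 2 + X 3) = 0 := by
    simp
    norm_num
  exact eq_zero_of_smul_eq_zero_of_mem_span_one_X (hs ▸ prime_X_zero_sub_rename_succ _)
    (not_dvd_of_eval_eq_zero _ hs_zero (by simp))
    (not_dvd_of_eval_eq_zero _ hs_zero (by simp; norm_num)) hx hsx
end

section
/- Let k be a field and R' = k[a, b, c, d]. Let N₁ = R'/(a − b + c − d, (b − d)(c − d)) and N₂ = R'/(a − b, c − d). Since the ideal (a − b + c − d, (b − d)(c − d)) is contained in (a − b, c − d), there is a canonical surjective R'-linear projection π : N₁ → N₂. The kernel of π is the cyclic R'-submodule of N₁ generated by the class of c − d, and it is isomorphic as an R'-module to the quotient of R' by the annihilator ideal (a − b + c − d, b − d); in particular ker π is a cyclic R'-module isomorphic to a quotient of R' by an ideal generated by two linearly independent linear forms. -/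
open MvPolynomial

section Aux

variable {k : Type*} [Field k]

private noncomputable def IIbσ : MvPolynomial (Fin 4) k →ₐ[k] MvPolynomial (Fin 4) k :=
  aeval ![2 * X 3 - X 2, X 3, X 2, X 3]

private lemma IIb_sub_mem (f : MvPolynomial (Fin 4) k) :
    f - IIbσ f ∈ Ideal.span {(X 0 - X 1 + X 2 - X 3 : MvPolynomial (Fin 4) k), X 1 - X 3} := by
  set K := Ideal.span {(X 0 - X 1 + X 2 - X 3 : MvPolynomial (Fin 4) k), X 1 - X 3} with hK
  induction f using MvPolynomial.induction_on with
  | C a => simp [IIbσ]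
  | add p q hp hq =>
      have : p + q - IIbσ (p + q) = (p - IIbσ p) + (q - IIbσ q) := by
        simp [map_add]; ring
      rw [this]; exact K.add_mem hp hq
  | mul_X p i hp =>
      have : p * X i - IIbσ (p * X i) =
          (p - IIbσ p) * X i + IIbσ p * (X i - IIbσ (X i)) := by
        simp [map_mul]; ring
      rw [this]
      refine K.add_mem (K.mul_mem_right _ hp) (K.mul_mem_left _ ?_)
      have hXi : (X i : MvPolynomial (Fin 4) k) - IIbσ (X i) ∈ K := by
        fin_cases i
        · have h0 : (X 0 : MvPolynomial (Fin 4) k) - IIbσ (X 0)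
              = 1 * (X 0 - X 1 + X 2 - X 3) + 1 * (X 1 - X 3) := by
            simp [IIbσ, aeval_X]; ring
          rw [hK, Ideal.mem_span_pair]; exact ⟨1, 1, h0.symm⟩
        · have h1 : (X 1 : MvPolynomial (Fin 4) k) - IIbσ (X 1)
              = 0 * (X 0 - X 1 + X 2 - X 3) + 1 * (X 1 - X 3) := by
            simp [IIbσ, aeval_X]
          rw [hK, Ideal.mem_span_pair]; exact ⟨0, 1, h1.symm⟩
        · simp [IIbσ, aeval_X]
        · simp [IIbσ, aeval_X]
      exact hXi

private lemma IIb_key (r : MvPolynomial (Fin 4) k)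
    (h : r * (X 2 - X 3) ∈ Ideal.span {(X 0 - X 1 + X 2 - X 3 : MvPolynomial (Fin 4) k),
      (X 1 - X 3) * (X 2 - X 3)}) :
    r ∈ Ideal.span {(X 0 - X 1 + X 2 - X 3 : MvPolynomial (Fin 4) k), X 1 - X 3} := by
  rw [Ideal.mem_span_pair] at h
  obtain ⟨p, q, hpq⟩ := h
  have happ := congrArg (IIbσ (k := k)) hpq
  have hgen1 : IIbσ (k := k) (X 0 - X 1 + X 2 - X 3) = 0 := by
    simp [IIbσ, aeval_X]; ring
  have hgen2 : IIbσ (k := k) (X 1 - X 3) = 0 := by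
    simp [IIbσ, aeval_X]
  have hcd : IIbσ (k := k) (X 2 - X 3) = X 2 - X 3 := by
    simp [IIbσ, aeval_X]
  simp only [map_add, map_mul, hgen1, hgen2, hcd, zero_mul, mul_zero, add_zero,
    zero_add] at happ
  replace happ : IIbσ (k := k) r * (X 2 - X 3) = 0 := happ.symm
  have hne : (X 2 - X 3 : MvPolynomial (Fin 4) k) ≠ 0 := by
    rw [sub_ne_zero]
    intro hEq
    exact (by decide : (2 : Fin 4) ≠ 3) (MvPolynomial.X_injective hEq)
  have hσr : IIbσ (k := k) r = 0 := by
    rcases mul_eq_zero.mp happ with h' | h'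
    · exact h'
    · exact absurd h' hne
  have := IIb_sub_mem (k := k) r
  rwa [hσr, sub_zero] at this

end Aux

set_option maxHeartbeats 1000000 in
/-- In `R' = k[a, b, c, d]` (with `a = X 0`, `b = X 1`, `c = X 2`, `d = X 3`), let
`N₁ = R'/(a − b + c − d, (b − d)(c − d))` and `N₂ = R'/(a − b, c − d)`.  The ideal
`(a − b + c − d, (b − d)(c − d))` is contained in `(a − b, c − d)`, so there is a
canonical surjective `R'`-linear projection `π : N₁ → N₂`.  Its kernel is the cyclic
`R'`-submodule of `N₁` generated by the class of `c − d`, and it is isomorphic as an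
`R'`-module to `R'/(a − b + c − d, b − d)`, the quotient of `R'` by the annihilator
ideal. -/
theorem IIb_two_term_complex (k : Type*) [Field k] :
    ∀ I J : Ideal (MvPolynomial (Fin 4) k),
      I = Ideal.span {(X 0 - X 1 + X 2 - X 3 : MvPolynomial (Fin 4) k),
          (X 1 - X 3) * (X 2 - X 3)} →
      J = Ideal.span {(X 0 - X 1 : MvPolynomial (Fin 4) k), X 2 - X 3} →
      I ≤ J ∧
      ∃ π : (MvPolynomial (Fin 4) k ⧸ I) →ₗ[MvPolynomial (Fin 4) k]
            (MvPolynomial (Fin 4) k ⧸ J),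
        (∀ f : MvPolynomial (Fin 4) k,
          π (Ideal.Quotient.mk I f) = Ideal.Quotient.mk J f) ∧
        Function.Surjective π ∧
        LinearMap.ker π = Submodule.span (MvPolynomial (Fin 4) k)
          {Ideal.Quotient.mk I (X 2 - X 3)} ∧
        Nonempty ((MvPolynomial (Fin 4) k ⧸
            Ideal.span {(X 0 - X 1 + X 2 - X 3 : MvPolynomial (Fin 4) k), X 1 - X 3})
          ≃ₗ[MvPolynomial (Fin 4) k] LinearMap.ker π) := by
  intro I J hI hJ
  set R := MvPolynomial (Fin 4) k
  -- I ≤ J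
  have hcdJ : (X 2 - X 3 : R) ∈ J := by
    rw [hJ, Ideal.mem_span_pair]; exact ⟨0, 1, by ring⟩
  have habJ : (X 0 - X 1 : R) ∈ J := by
    rw [hJ, Ideal.mem_span_pair]; exact ⟨1, 0, by ring⟩
  have hIJ : I ≤ J := by
    rw [hI, Ideal.span_le]
    rintro x (rfl | rfl)
    · rw [SetLike.mem_coe, hJ, Ideal.mem_span_pair]; exact ⟨1, 1, by ring⟩
    · exact J.mul_mem_left _ hcdJ
  refine ⟨hIJ, ?_⟩
  -- the projection
  refine ⟨Submodule.mapQ I J LinearMap.id hIJ, ?_, ?_, ?_, ?_⟩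
  · intro f
    rw [← Ideal.Quotient.mk_eq_mk, ← Ideal.Quotient.mk_eq_mk, Submodule.mapQ_apply]
    rfl
  · intro y
    obtain ⟨f, rfl⟩ := Ideal.Quotient.mk_surjective y
    exact ⟨Ideal.Quotient.mk I f, by
      rw [← Ideal.Quotient.mk_eq_mk, ← Ideal.Quotient.mk_eq_mk, Submodule.mapQ_apply]; rfl⟩
  · -- kernel computation
    apply le_antisymm
    · intro x hx
      obtain ⟨f, rfl⟩ := Ideal.Quotient.mk_surjective (I := I) x
      rw [LinearMap.mem_ker, ← Ideal.Quotient.mk_eq_mk, Submodule.mapQ_apply,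
        LinearMap.id_apply, Ideal.Quotient.mk_eq_mk, Ideal.Quotient.eq_zero_iff_mem, hJ,
        Ideal.mem_span_pair] at hx
      obtain ⟨p, q, hpq⟩ := hx
      rw [Submodule.mem_span_singleton]
      refine ⟨q - p, ?_⟩
      have hsm : (q - p) • (Ideal.Quotient.mk I (X 2 - X 3)) =
          Ideal.Quotient.mk I ((q - p) * (X 2 - X 3)) := by
        rw [← Ideal.Quotient.mk_eq_mk, ← Ideal.Quotient.mk_eq_mk,
          ← Submodule.Quotient.mk_smul, smul_eq_mul]
      rw [hsm, Ideal.Quotient.eq]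
      have : (q - p) * (X 2 - X 3) - f = (-p) * (X 0 - X 1 + X 2 - X 3) := by
        rw [← hpq]; ring
      rw [this, hI]
      exact Ideal.mul_mem_left _ _ (Ideal.subset_span (Or.inl rfl))
    · rw [Submodule.span_le, Set.singleton_subset_iff]
      rw [SetLike.mem_coe, LinearMap.mem_ker, ← Ideal.Quotient.mk_eq_mk,
        Submodule.mapQ_apply, LinearMap.id_apply, Ideal.Quotient.mk_eq_mk,
        Ideal.Quotient.eq_zero_iff_mem]
      exact hcdJ
  · -- the isomorphism
    set π := Submodule.mapQ I J LinearMap.id hIJ with hπdef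
    set ξ : R ⧸ I := Ideal.Quotient.mk I (X 2 - X 3) with hξ
    have hξker : ξ ∈ LinearMap.ker π := by
      rw [LinearMap.mem_ker, hξ, hπdef, ← Ideal.Quotient.mk_eq_mk, Submodule.mapQ_apply,
        LinearMap.id_apply, Ideal.Quotient.mk_eq_mk, Ideal.Quotient.eq_zero_iff_mem]
      exact hcdJ
    set L := LinearMap.ker π with hL
    set g : R →ₗ[R] L := LinearMap.codRestrict L (LinearMap.toSpanSingleton R (R ⧸ I) ξ)
      (fun r => by
        rw [LinearMap.toSpanSingleton_apply]
        exact L.smul_mem r hξker) with hg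
    have hgapp : ∀ r : R, (g r : R ⧸ I) = r • ξ := fun r => by
      rw [hg, LinearMap.codRestrict_apply, LinearMap.toSpanSingleton_apply]
    have hgsurj : Function.Surjective g := by
      intro ⟨y, hy⟩
      -- y ∈ ker π, hence y ∈ span {ξ}
      have hy' : y ∈ Submodule.span R {ξ} := by
        -- reprove: ker π ≤ span {ξ}
        obtain ⟨f, rfl⟩ := Ideal.Quotient.mk_surjective (I := I) y
        rw [hL, LinearMap.mem_ker, hπdef, ← Ideal.Quotient.mk_eq_mk, Submodule.mapQ_apply,
          LinearMap.id_apply, Ideal.Quotient.mk_eq_mk, Ideal.Quotient.eq_zero_iff_mem, hJ,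
          Ideal.mem_span_pair] at hy
        obtain ⟨p, q, hpq⟩ := hy
        rw [Submodule.mem_span_singleton]
        refine ⟨q - p, ?_⟩
        have hsm : (q - p) • ξ = Ideal.Quotient.mk I ((q - p) * (X 2 - X 3)) := by
          rw [hξ, ← Ideal.Quotient.mk_eq_mk, ← Ideal.Quotient.mk_eq_mk,
            ← Submodule.Quotient.mk_smul, smul_eq_mul]
        rw [hsm, Ideal.Quotient.eq]
        have : (q - p) * (X 2 - X 3) - f = (-p) * (X 0 - X 1 + X 2 - X 3) := by
          rw [← hpq]; ring
        rw [this, hI]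
        exact Ideal.mul_mem_left _ _ (Ideal.subset_span (Or.inl rfl))
      rw [Submodule.mem_span_singleton] at hy'
      obtain ⟨r, hr⟩ := hy'
      exact ⟨r, Subtype.ext (by rw [hgapp, hr])⟩
    have hker : LinearMap.ker g =
        Ideal.span {(X 0 - X 1 + X 2 - X 3 : R), X 1 - X 3} := by
      ext r
      rw [LinearMap.mem_ker]
      constructor
      · intro hr
        have : (g r : R ⧸ I) = 0 := by rw [hr]; rfl
        rw [hgapp, hξ, ← Ideal.Quotient.mk_eq_mk, ← Submodule.Quotient.mk_smul,
          smul_eq_mul, Ideal.Quotient.mk_eq_mk, Ideal.Quotient.eq_zero_iff_mem, hI] at this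
        exact IIb_key r this
      · intro hr
        apply Subtype.ext
        show (g r : R ⧸ I) = 0
        rw [hgapp, hξ, ← Ideal.Quotient.mk_eq_mk, ← Submodule.Quotient.mk_smul,
          smul_eq_mul, Ideal.Quotient.mk_eq_mk, Ideal.Quotient.eq_zero_iff_mem, hI,
          Ideal.mem_span_pair]
        rw [Ideal.mem_span_pair] at hr
        obtain ⟨u, v, huv⟩ := hr
        exact ⟨u * (X 2 - X 3), v, by rw [← huv]; ring⟩
    exact ⟨(Submodule.quotEquivOfEq _ _ hker.symm).trans (g.quotKerEquivOfSurjective hgsurj)⟩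
end
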